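/- arXiv:1208.3002 — 2 statements merged into one kernel-verified Lean document; each statement's English description precedes it below -/
import Mathlib

section
/- Let p > 1, a > 0, R > 0. For δ > 0 sufficiently small, there exists s ∈ (0, R) satisfying the equation δ^{2/(p-1)} s^{-2/(p-1)} φ'(1) = a / ln(s/R), where φ'(1) < 0 is the boundary radial derivative of the unique positive radial solution of -Δφ = φ^p on B_1(0). Moreover, as δ → 0, s / (δ |ln δ|^{(p-1)/2}) → (|φ'(1)|/a)^{(p-1)/2}. -/
open Real Set Filter
open scoped Topology

/-!
With `k = |c| / a` and `β = (p - 1) / 2`, the equation says exactly `δ = s (k log (R / s)) ^ (-β)`.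
The right-hand side is continuous and strictly increasing in `s` on `[0, R)` and vanishes at `0`,
so by the intermediate value theorem it has a right inverse `s(δ) → 0⁺`. Taking logarithms,
`|log δ| = log (R / s) + O(log log (R / s))`, whence
`s / (δ |log δ| ^ β) = (k log (R / s) / |log δ|) ^ β → k ^ β`.
-/

theorem exists_rightInvOn_tendsto_nhdsGT {f : ℝ → ℝ} {a b : ℝ} (hab : a < b)
    (hf : ContinuousOn f (Icc a b)) (hmono : StrictMonoOn f (Icc a b)) :
    ∃ s : ℝ → ℝ, (∀ᶠ y in 𝓝[>] (f a), s y ∈ Ioo a b ∧ f (s y) = y) ∧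
      Tendsto s (𝓝[>] (f a)) (𝓝[>] a) := by
  have hsurj : Ioo (f a) (f b) ⊆ f '' Ioo a b := intermediate_value_Ioo hab.le hf
  have hsol : ∀ᶠ y in 𝓝[>] (f a),
      Function.invFunOn f (Ioo a b) y ∈ Ioo a b ∧ f (Function.invFunOn f (Ioo a b) y) = y := by
    filter_upwards [Ioo_mem_nhdsGT (hmono (left_mem_Icc.2 hab.le) (right_mem_Icc.2 hab.le) hab)]
      with y hy
    exact ⟨Function.invFunOn_mem (hsurj hy), Function.invFunOn_eq (hsurj hy)⟩
  refine ⟨_, hsol, tendsto_nhdsWithin_iff.2 ⟨?_, hsol.mono fun y hy => hy.1.1⟩⟩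
  refine tendsto_order.2 ⟨fun c hc => hsol.mono fun y hy => hc.trans hy.1.1, fun c hc => ?_⟩
  have hc' : min c b ∈ Icc a b := ⟨le_min hc.le hab.le, min_le_right _ _⟩
  have hfc : f a < f (min c b) := hmono (left_mem_Icc.2 hab.le) hc' (lt_min hc hab)
  filter_upwards [hsol, Ioo_mem_nhdsGT hfc] with y ⟨hmem, hy⟩ hyc
  rw [← hy] at hyc
  exact ((hmono.lt_iff_lt (Ioo_subset_Icc_self hmem) hc').1 hyc.2).trans_le (min_le_left _ _)

theorem tendsto_log_div_nhdsGT_zero {R : ℝ} (hR : 0 < R) :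
    Tendsto (fun x => log (R / x)) (𝓝[>] 0) atTop :=
  tendsto_log_atTop.comp (by
    simpa only [div_eq_mul_inv] using tendsto_inv_nhdsGT_zero.const_mul_atTop hR :
      Tendsto (fun x => R / x) (𝓝[>] 0) atTop)

theorem tendsto_div_add_add_mul_log_atTop (C β : ℝ) :
    Tendsto (fun L => L / (L + C + β * log L)) atTop (𝓝 1) := by
  have h : Tendsto (fun L => 1 + C * L⁻¹ + β * (log L / L)) atTop (𝓝 (1 + C * 0 + β * 0)) :=
    (tendsto_const_nhds.add (tendsto_inv_atTop_zero.const_mul C)).add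
      (isLittleO_log_id_atTop.tendsto_div_nhds_zero.const_mul β)
  rw [mul_zero, mul_zero, add_zero, add_zero] at h
  have h' := h.inv₀ one_ne_zero
  rw [inv_one] at h'
  refine h'.congr' ?_
  filter_upwards [eventually_gt_atTop 0] with L hL
  field_simp

noncomputable def logDamped (k β R x : ℝ) : ℝ := x * (k * log (R / x)) ^ (-β)

section

variable {k β R : ℝ}

theorem log_div_pos_of_mem_Ioo {x : ℝ} (hx : x ∈ Ioo 0 R) : 0 < log (R / x) :=
  log_pos ((one_lt_div hx.1).2 hx.2)

@[simp]
theorem logDamped_zero : logDamped k β R 0 = 0 := zero_mul _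

theorem logDamped_pos (hk : 0 < k) {x : ℝ} (hx : x ∈ Ioo 0 R) : 0 < logDamped k β R x :=
  mul_pos hx.1 (rpow_pos_of_pos (mul_pos hk (log_div_pos_of_mem_Ioo hx)) _)

theorem strictMonoOn_logDamped (hk : 0 < k) (hβ : 0 ≤ β) :
    StrictMonoOn (logDamped k β R) (Ico 0 R) := by
  intro x hx y hy hxy
  have hy' : y ∈ Ioo 0 R := ⟨hx.1.trans_lt hxy, hy.2⟩
  rcases hx.1.eq_or_lt with rfl | hx0
  · simpa using logDamped_pos hk hy'
  have hR : 0 < R := hy'.1.trans hy'.2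
  have hlog : k * log (R / y) ≤ k * log (R / x) :=
    mul_le_mul_of_nonneg_left
      (log_le_log (div_pos hR hy'.1) (div_le_div_of_nonneg_left hR.le hx0 hxy.le)) hk.le
  calc logDamped k β R x < y * (k * log (R / x)) ^ (-β) :=
        mul_lt_mul_of_pos_right hxy
          (rpow_pos_of_pos (mul_pos hk (log_div_pos_of_mem_Ioo ⟨hx0, hx.2⟩)) _)
    _ ≤ logDamped k β R y :=
        mul_le_mul_of_nonneg_left (rpow_le_rpow_of_nonpos
          (mul_pos hk (log_div_pos_of_mem_Ioo hy')) hlog (neg_nonpos.2 hβ)) hy'.1.le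

theorem tendsto_logDamped_nhdsGT_zero (hk : 0 < k) (hβ : 0 < β) (hR : 0 < R) :
    Tendsto (logDamped k β R) (𝓝[>] 0) (𝓝 0) := by
  have hpow := (tendsto_rpow_neg_atTop hβ).comp
    ((tendsto_log_div_nhdsGT_zero hR).const_mul_atTop hk)
  have h := (tendsto_nhdsWithin_of_tendsto_nhds tendsto_id).mul hpow
  rw [mul_zero] at h
  exact h

theorem continuousOn_logDamped (hk : 0 < k) (hβ : 0 < β) (hR : 0 < R) :
    ContinuousOn (logDamped k β R) (Ico 0 R) := by
  intro x hx
  rcases hx.1.eq_or_lt with rfl | hx0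
  · refine (continuousWithinAt_Ioi_iff_Ici.1 ?_).mono Ico_subset_Ici_self
    simpa [ContinuousWithinAt] using tendsto_logDamped_nhdsGT_zero hk hβ hR
  · have hkL := mul_pos hk (log_div_pos_of_mem_Ioo ⟨hx0, hx.2⟩)
    exact (continuousAt_id.mul ((((continuousAt_const.div continuousAt_id hx0.ne').log
      (div_pos hR hx0).ne').const_mul k).rpow_const (Or.inl hkL.ne'))).continuousWithinAt

theorem logDamped_rpow_inv_mul_eq_div_log {a c : ℝ} (ha : 0 < a) (hc : c < 0) (hβ : β ≠ 0)
    {x : ℝ} (hx : x ∈ Ioo 0 R) :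
    logDamped (-c / a) β R x ^ β⁻¹ * x ^ (-β⁻¹) * c = a / log (x / R) := by
  have hkL : 0 < -c / a * log (R / x) :=
    mul_pos (div_pos (neg_pos.2 hc) ha) (log_div_pos_of_mem_Ioo hx)
  rw [logDamped, mul_rpow hx.1.le (rpow_nonneg hkL.le _), ← rpow_mul hkL.le, neg_mul,
    mul_inv_cancel₀ hβ, mul_right_comm (x ^ β⁻¹), ← rpow_add hx.1, add_neg_cancel, rpow_zero,
    one_mul, rpow_neg_one, ← inv_div R x, log_inv]
  have := hc.ne
  field_simp

theorem tendsto_div_logDamped_mul_abs_log_rpow (hk : 0 < k) (hβ : 0 < β) (hR : 0 < R) :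
    Tendsto (fun x => x / (logDamped k β R x * |log (logDamped k β R x)| ^ β)) (𝓝[>] 0)
      (𝓝 (k ^ β)) := by
  set C := β * log k - log R
  have hlim : Tendsto (fun x => (k * (log (R / x) /
      (log (R / x) + C + β * log (log (R / x))))) ^ β) (𝓝[>] 0) (𝓝 (k ^ β)) := by
    have := ((tendsto_div_add_add_mul_log_atTop C β).comp
      (tendsto_log_div_nhdsGT_zero hR)).const_mul k
    rw [mul_one] at this
    exact this.rpow_const (Or.inl hk.ne')
  refine hlim.congr' ?_
  filter_upwards [Ioo_mem_nhdsGT hR,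
    (tendsto_logDamped_nhdsGT_zero hk hβ hR).eventually (gt_mem_nhds one_pos)] with x hx hg1
  have hL := log_div_pos_of_mem_Ioo hx
  have hkL := mul_pos hk hL
  have hg := logDamped_pos (β := β) hk hx
  have hlog : -log (logDamped k β R x) = log (R / x) + C + β * log (log (R / x)) := by
    have hRx : log (R / x) = log R - log x := log_div hR.ne' hx.1.ne'
    rw [logDamped, log_mul hx.1.ne' (rpow_pos_of_pos hkL _).ne', log_rpow hkL,
      log_mul hk.ne' hL.ne']
    linear_combination -hRx
  have hM : 0 < log (R / x) + C + β * log (log (R / x)) := hlog ▸ neg_pos.2 (log_neg hg hg1)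
  rw [abs_of_neg (log_neg hg hg1), hlog, ← mul_div_assoc, div_rpow hkL.le hM.le, logDamped,
    rpow_neg hkL.le]
  have := (rpow_pos_of_pos hkL β).ne'
  have := (rpow_pos_of_pos hM β).ne'
  have := hx.1.ne'
  field_simp

end

/-- For δ > 0 small there is s ∈ (0,R) with
δ^{2/(p-1)} s^{-2/(p-1)} φ'(1) = a/ln(s/R) (here c = φ'(1) < 0), and the
solution satisfies s/(δ|ln δ|^{(p-1)/2}) → (|c|/a)^{(p-1)/2} as δ → 0⁺. -/
theorem stmt3 (p a R c : ℝ) (hp : 1 < p) (ha : 0 < a) (hR : 0 < R) (hc : c < 0) :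
    ∃ s : ℝ → ℝ,
      (∀ᶠ δ in 𝓝[>] (0:ℝ), s δ ∈ Set.Ioo 0 R ∧
        δ ^ (2 / (p - 1)) * (s δ) ^ (-(2 / (p - 1))) * c = a / Real.log (s δ / R)) ∧
      Tendsto (fun δ => s δ / (δ * |Real.log δ| ^ ((p - 1) / 2))) (𝓝[>] (0:ℝ))
        (𝓝 ((|c| / a) ^ ((p - 1) / 2))) := by
  have hβ : 0 < (p - 1) / 2 := div_pos (sub_pos.2 hp) two_pos
  have hk : 0 < -c / a := div_pos (neg_pos.2 hc) ha
  have hsub : Icc 0 (R / 2) ⊆ Ico 0 R := Icc_subset_Ico_right (half_lt_self hR)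
  obtain ⟨s, hsol, hs⟩ := exists_rightInvOn_tendsto_nhdsGT (half_pos hR)
    ((continuousOn_logDamped hk hβ hR).mono hsub) ((strictMonoOn_logDamped hk hβ.le).mono hsub)
  rw [logDamped_zero] at hsol hs
  refine ⟨s, hsol.mono fun δ ⟨hmem, hδ⟩ => ?_, ?_⟩
  · have hmem' : s δ ∈ Ioo 0 R := ⟨hmem.1, hmem.2.trans (half_lt_self hR)⟩
    have := logDamped_rpow_inv_mul_eq_div_log ha hc hβ.ne' hmem'
    rw [hδ, inv_div] at this
    exact ⟨hmem', this⟩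
  · rw [abs_of_neg hc]
    refine ((tendsto_div_logDamped_mul_abs_log_rpow hk hβ hR).comp hs).congr' ?_
    filter_upwards [hsol] with δ hδ
    simp only [Function.comp_def, hδ.2]
end

section
/- Let Ω ⊂ ℝ² be a bounded domain, R > 0 such that Ω is contained in B_R(x) for every x ∈ Ω. Let W_{δ,a}(x) be defined by W_{δ,a}(x) = a + δ^{2/(p-1)} s^{-2/(p-1)} φ(|x|/s) for |x| ≤ s and W_{δ,a}(x) = a·ln(|x|/R)/ln(s/R) for s ≤ |x| ≤ R, where s ∈ (0,R) satisfies δ^{2/(p-1)} s^{-2/(p-1)} φ'(1) = a/ln(s/R). Then W_{δ,a} is C¹ on B_R(0), vanishes on ∂B_R(0), and satisfies -δ²ΔW_{δ,a} = (W_{δ,a} - a)_+^p in B_R(0). -/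
/-!
`W` is the radial function `g (‖x‖)` with `g` the profile glued at `r = s`. For a radial
function whose profile satisfies `g' r = r * k r`, the gradient is `k ‖x‖ • x` and the Hessian
is `k ‖x‖ • I + (k' ‖x‖ / ‖x‖) • x ⊗ x`, so its Laplacian in the plane is `2 k + r k'`. Inside
`B_s` the function `k` is a rescaled `t ↦ φ' t / t`, which `φ' 0 = 0` extends continuously to
`t = 0` as `dslope φ' 0`, and there `2 k + r k'` is a rescaled `φ'' + φ' / t`; the scaling
`c ^ (p - 1) = δ² / s²` turns the equation for `φ` into `-δ² ΔW = (W - a) ^ p`. Outside `B_s` the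
profile is harmonic and `W ≤ a`. The matching condition glues `g'` at `r = s`, and the equation
for `φ` at `t = 1`, where `φ = 0`, gives `φ'' 1 = -φ' 1`, which glues `k'` as well.
-/

open MeasureTheory Real Set

noncomputable def lap (u : EuclideanSpace ℝ (Fin 2) → ℝ)
    (x : EuclideanSpace ℝ (Fin 2)) : ℝ :=
  ∑ i : Fin 2, iteratedFDeriv ℝ 2 u x
    ![EuclideanSpace.single i 1, EuclideanSpace.single i 1]

open Filter Topology Asymptotics InnerProductSpace Laplacian

section Radial

variable {E : Type*} [NormedAddCommGroup E] [InnerProductSpace ℝ E]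

/-- `innerSL ℝ` retyped as a linear (rather than conjugate-linear) map, so that it can serve as a
Fréchet derivative. -/
noncomputable def realInnerSL : E →L[ℝ] E →L[ℝ] ℝ := innerSL ℝ

@[simp]
theorem realInnerSL_apply (x y : E) : realInnerSL x y = inner ℝ x y := rfl

theorem hasFDerivAt_norm {x : E} (hx : x ≠ 0) :
    HasFDerivAt (‖·‖) (‖x‖⁻¹ • realInnerSL x) x := by
  have h := (hasStrictFDerivAt_norm_sq x).hasFDerivAt.sqrt (by positivity)
  simp only [sqrt_sq (norm_nonneg _)] at h
  convert h using 1
  rw [two_smul, ← two_smul ℝ, smul_smul]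
  congr 1
  field_simp

theorem hasFDerivAt_comp_norm {g : ℝ → ℝ} {d : ℝ} {x : E} (hx : x ≠ 0)
    (hg : HasDerivAt g d ‖x‖) :
    HasFDerivAt (fun y => g ‖y‖) ((d / ‖x‖) • realInnerSL x) x := by
  refine (hg.comp_hasFDerivAt x (hasFDerivAt_norm hx)).congr_fderiv ?_
  rw [smul_smul, div_eq_mul_inv]

theorem hasFDerivAt_comp_norm_zero {F : Type*} [NormedAddCommGroup F] [NormedSpace ℝ F]
    {g : ℝ → ℝ} (hg : HasDerivAt g 0 0) :
    HasFDerivAt (fun y : F => g ‖y‖) (0 : F →L[ℝ] ℝ) 0 := by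
  have h := (hasDerivAt_iff_isLittleO_nhds_zero.mp hg).comp_tendsto (tendsto_norm_zero (E := F))
  refine hasFDerivAt_iff_isLittleO_nhds_zero.mpr ?_
  simpa [Function.comp_def] using h.trans_isBigO (isBigO_refl (fun y : F => y) _).norm_left

theorem hasFDerivAt_smul_realInnerSL {k : ℝ → ℝ} {d : ℝ} {x : E} (hx : x ≠ 0)
    (hk : HasDerivAt k d ‖x‖) :
    HasFDerivAt (fun y => k ‖y‖ • realInnerSL y)
      (k ‖x‖ • realInnerSL + ((d / ‖x‖) • realInnerSL x).smulRight (realInnerSL x)) x :=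
  (hasFDerivAt_comp_norm hx hk).smul (realInnerSL).hasFDerivAt

theorem hasFDerivAt_smul_realInnerSL_zero {k : ℝ → ℝ} (hk : ContinuousWithinAt k (Ici 0) 0) :
    HasFDerivAt (fun y : E => k ‖y‖ • realInnerSL y) (k 0 • realInnerSL) 0 := by
  have hnorm : Tendsto (‖·‖) (𝓝 (0 : E)) (𝓝[Ici 0] 0) :=
    tendsto_nhdsWithin_iff.mpr ⟨tendsto_norm_zero, .of_forall fun y => norm_nonneg y⟩
  have hsmall : (fun y : E => k ‖y‖ - k 0) =o[𝓝 0] (fun _ => (1 : ℝ)) :=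
    isLittleO_one_iff ℝ |>.mpr (tendsto_sub_nhds_zero_iff.mpr (hk.tendsto.comp hnorm))
  refine hasFDerivAt_iff_isLittleO_nhds_zero.mpr ?_
  simpa [sub_smul] using hsmall.smul_isBigO ((realInnerSL (E := E)).isBigO_id (𝓝 0))

variable {g k k' : ℝ → ℝ}

theorem hasFDerivAt_radial (hg : ∀ r > 0, HasDerivAt g (r * k r) r) (hg0 : HasDerivAt g 0 0)
    (x : E) : HasFDerivAt (fun y => g ‖y‖) (k ‖x‖ • realInnerSL x) x := by
  rcases eq_or_ne x 0 with rfl | hx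
  · simpa using hasFDerivAt_comp_norm_zero (F := E) hg0
  · have hr := norm_pos_iff.mpr hx
    convert hasFDerivAt_comp_norm hx (hg _ hr) using 2
    field_simp

theorem hasFDerivAt_radial_gradient (hk : ∀ r > 0, HasDerivAt k (k' r) r)
    (hk0 : ContinuousWithinAt k (Ici 0) 0) (x : E) :
    HasFDerivAt (fun y => k ‖y‖ • realInnerSL y)
      (k ‖x‖ • realInnerSL + ((k' ‖x‖ / ‖x‖) • realInnerSL x).smulRight (realInnerSL x)) x := by
  rcases eq_or_ne x 0 with rfl | hx
  · convert hasFDerivAt_smul_realInnerSL_zero (E := E) hk0 using 1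
    ext
    simp
  · exact hasFDerivAt_smul_realInnerSL hx (hk _ (norm_pos_iff.mpr hx))

theorem contDiff_radial (hg : ∀ r > 0, HasDerivAt g (r * k r) r) (hg0 : HasDerivAt g 0 0)
    (hk : ∀ r > 0, HasDerivAt k (k' r) r) (hk0 : ContinuousWithinAt k (Ici 0) 0) :
    ContDiff ℝ 1 (fun y : E => g ‖y‖) :=
  contDiff_one_iff_hasFDerivAt.mpr ⟨_, continuous_iff_continuousAt.mpr fun x =>
    (hasFDerivAt_radial_gradient hk hk0 x).continuousAt, hasFDerivAt_radial hg hg0⟩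

theorem OrthonormalBasis.sum_smul_realInnerSL_add_smulRight {ι : Type*} [Fintype ι]
    (b : OrthonormalBasis ι ℝ E) (α β : ℝ) (x : E) :
    ∑ i, (α • realInnerSL (E := E) + (β • realInnerSL x).smulRight (realInnerSL x)) (b i) (b i)
      = Fintype.card ι * α + β * ‖x‖ ^ 2 := by
  simp [Finset.sum_add_distrib, mul_assoc, ← Finset.mul_sum, ← sq,
    OrthonormalBasis.sum_sq_inner_left]

theorem laplacian_radial [FiniteDimensional ℝ E] (hg : ∀ r > 0, HasDerivAt g (r * k r) r)
    (hg0 : HasDerivAt g 0 0) (hk : ∀ r > 0, HasDerivAt k (k' r) r)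
    (hk0 : ContinuousWithinAt k (Ici 0) 0) (x : E) :
    Δ (fun y : E => g ‖y‖) x = Module.finrank ℝ E * k ‖x‖ + ‖x‖ * k' ‖x‖ := by
  have hfderiv : fderiv ℝ (fun y : E => g ‖y‖) = fun y => k ‖y‖ • realInnerSL y :=
    funext fun y => (hasFDerivAt_radial hg hg0 y).fderiv
  rw [laplacian_eq_iteratedFDeriv_stdOrthonormalBasis]
  simp only [iteratedFDeriv_two_apply, hfderiv, (hasFDerivAt_radial_gradient hk hk0 x).fderiv,
    Matrix.cons_val_zero, Matrix.cons_val_one]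
  rw [OrthonormalBasis.sum_smul_realInnerSL_add_smulRight, Fintype.card_fin]
  rcases eq_or_ne x 0 with rfl | hx
  · simp
  · field_simp [norm_ne_zero_iff.mpr hx]

theorem lap_eq_laplacian (u : EuclideanSpace ℝ (Fin 2) → ℝ) (x : EuclideanSpace ℝ (Fin 2)) :
    lap u x = Δ u x := by
  simp [lap, laplacian_eq_iteratedFDeriv_orthonormalBasis u (EuclideanSpace.basisFun (Fin 2) ℝ)]

end Radial

theorem hasDerivAt_of_eqOn_Iic_of_eqOn_Ici {f f₁ f₂ d : ℝ → ℝ} {s r : ℝ}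
    (h₁ : EqOn f f₁ (Iic s)) (h₂ : EqOn f f₂ (Ici s))
    (hd₁ : ∀ t ∈ Ioc 0 s, HasDerivAt f₁ (d t) t) (hd₂ : ∀ t ∈ Ici s, HasDerivAt f₂ (d t) t)
    (hr : 0 < r) : HasDerivAt f (d r) r := by
  rcases lt_trichotomy r s with hrs | rfl | hrs
  · exact (hd₁ r ⟨hr, hrs.le⟩).congr_of_eventuallyEq
      (eventually_of_mem (Iio_mem_nhds hrs) fun t ht => h₁ (mem_Iic.mpr (le_of_lt ht)))
  · have hl := (hd₁ r ⟨hr, le_rfl⟩).hasDerivWithinAt.congr h₁ (h₁ self_mem_Iic)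
    have hu := hl.union ((hd₂ r self_mem_Ici).hasDerivWithinAt.congr h₂ (h₂ self_mem_Ici))
    rwa [Iic_union_Ici, hasDerivWithinAt_univ] at hu
  · exact (hd₂ r hrs.le).congr_of_eventuallyEq
      (eventually_of_mem (Ioi_mem_nhds hrs) fun t ht => h₂ (mem_Ici.mpr (le_of_lt ht)))

section DSlope

variable {𝕜 : Type*} [NontriviallyNormedField 𝕜]

theorem Differentiable.continuous_dslope {f : 𝕜 → 𝕜} (hf : Differentiable 𝕜 f) (a : 𝕜) :
    Continuous (dslope f a) := by
  refine continuous_iff_continuousAt.mpr fun t => ?_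
  rcases eq_or_ne t a with rfl | ht
  · exact continuousAt_dslope_same.mpr (hf t)
  · exact (continuousAt_dslope_of_ne ht).mpr (hf t).continuousAt

theorem dslope_zero_of_ne {f : 𝕜 → 𝕜} (hf : f 0 = 0) {t : 𝕜} (ht : t ≠ 0) :
    dslope f 0 t = f t / t := by
  rw [dslope_of_ne f ht, slope_def_field, hf, sub_zero, sub_zero]

theorem HasDerivAt.dslope_of_ne {f : 𝕜 → 𝕜} {f' a t : 𝕜} (hf : HasDerivAt f f' t) (ht : t ≠ a) :
    HasDerivAt (dslope f a) ((f' - dslope f a t) / (t - a)) t := by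
  have hta : t - a ≠ 0 := sub_ne_zero.mpr ht
  have h := (hf.sub_const (f a)).div ((hasDerivAt_id t).sub_const a) hta
  refine (h.congr_of_eventuallyEq ?_).congr_deriv ?_
  · filter_upwards [dslope_eventuallyEq_slope_of_ne f ht] with u hu
    simp [hu, slope_def_field]
  · rw [_root_.dslope_of_ne f ht, slope_def_field]
    simp only [id]
    field_simp

end DSlope

section Profile

variable (φ : ℝ → ℝ) (a c s R : ℝ)

noncomputable def gluedProfile (r : ℝ) : ℝ :=
  if r ≤ s then a + c * φ (r / s) else a * log (r / R) / log (s / R)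

/-- `deriv (gluedProfile φ a c s R) r / r`, continued to `r = 0` through `dslope`. -/
noncomputable def gluedProfileSlope (r : ℝ) : ℝ :=
  if r ≤ s then c / s ^ 2 * dslope (deriv φ) 0 (r / s) else a / (log (s / R) * r ^ 2)

noncomputable def gluedProfileSlopeDeriv (r : ℝ) : ℝ :=
  if r ≤ s then c / s ^ 2 * ((deriv (deriv φ) (r / s) - dslope (deriv φ) 0 (r / s)) / r)
  else -(2 * a / (log (s / R) * r ^ 3))

variable {φ a c s R}

theorem gluedProfile_of_le (hb : φ 1 = 0) (hs : s ≠ 0) (hL : log (s / R) ≠ 0) {r : ℝ}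
    (hr : s ≤ r) : gluedProfile φ a c s R r = a * log (r / R) / log (s / R) := by
  rcases hr.eq_or_lt with rfl | hr
  · simp [gluedProfile, div_self hs, hb, hL]
  · simp [gluedProfile, not_le.mpr hr]

theorem gluedProfileSlope_of_le (h0 : deriv φ 0 = 0) (hs : s ≠ 0)
    (hmatch : c * deriv φ 1 = a / log (s / R)) {r : ℝ} (hr : s ≤ r) :
    gluedProfileSlope φ a c s R r = a / (log (s / R) * r ^ 2) := by
  rcases hr.eq_or_lt with rfl | hr
  · rw [gluedProfileSlope, if_pos le_rfl, div_self hs, dslope_zero_of_ne h0 one_ne_zero,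
      show a / (log (s / R) * s ^ 2) = a / log (s / R) / s ^ 2 by ring, ← hmatch]
    ring
  · simp [gluedProfileSlope, not_le.mpr hr]

theorem gluedProfileSlopeDeriv_of_le (h0 : deriv φ 0 = 0)
    (hφ1 : deriv (deriv φ) 1 = -deriv φ 1) (hs : s ≠ 0)
    (hmatch : c * deriv φ 1 = a / log (s / R)) {r : ℝ} (hr : s ≤ r) :
    gluedProfileSlopeDeriv φ a c s R r = -(2 * a / (log (s / R) * r ^ 3)) := by
  rcases hr.eq_or_lt with rfl | hr
  · rw [gluedProfileSlopeDeriv, if_pos le_rfl, div_self hs, dslope_zero_of_ne h0 one_ne_zero,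
      hφ1, show 2 * a / (log (s / R) * s ^ 3) = 2 * (a / log (s / R)) / s ^ 3 by ring, ← hmatch]
    field_simp
    ring
  · simp [gluedProfileSlopeDeriv, not_le.mpr hr]

theorem hasDerivAt_gluedProfile (hφ : Differentiable ℝ φ) (h0 : deriv φ 0 = 0) (hb : φ 1 = 0)
    (hs : 0 < s) (hR : R ≠ 0) (hL : log (s / R) ≠ 0) (hmatch : c * deriv φ 1 = a / log (s / R))
    {r : ℝ} (hr : 0 < r) :
    HasDerivAt (gluedProfile φ a c s R) (r * gluedProfileSlope φ a c s R r) r := by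
  refine hasDerivAt_of_eqOn_Iic_of_eqOn_Ici (f := gluedProfile φ a c s R)
    (f₁ := fun t => a + c * φ (t / s)) (f₂ := fun t => a * log (t / R) / log (s / R))
    (d := fun t => t * gluedProfileSlope φ a c s R t) (fun t (ht : t ≤ s) => if_pos ht)
    (fun t ht => gluedProfile_of_le hb hs.ne' hL ht) (fun t ht => ?_) (fun t ht => ?_) hr
  · have h := (((hφ _).hasDerivAt.comp t ((hasDerivAt_id t).div_const s)).const_mul c).const_add a
    refine h.congr_deriv ?_
    have ht0 : t ≠ 0 := ht.1.ne'
    rw [gluedProfileSlope, if_pos ht.2, dslope_zero_of_ne h0 (div_pos ht.1 hs).ne']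
    simp only [id]
    field_simp
  · have ht0 : t ≠ 0 := (hs.trans_le ht).ne'
    have h := ((((hasDerivAt_id t).div_const R).log (div_ne_zero ht0 hR)).const_mul a).div_const
      (log (s / R))
    refine h.congr_deriv ?_
    rw [gluedProfileSlope_of_le h0 hs.ne' hmatch ht]
    simp only [id]
    field_simp

theorem hasDerivAt_gluedProfile_zero (hφ : Differentiable ℝ φ) (h0 : deriv φ 0 = 0)
    (hs : 0 < s) : HasDerivAt (gluedProfile φ a c s R) 0 0 := by
  have h := (((hφ _).hasDerivAt.comp 0 ((hasDerivAt_id 0).div_const s)).const_mul c).const_add a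
  refine (h.congr_of_eventuallyEq (eventually_of_mem (Iio_mem_nhds hs) fun t ht => ?_)).congr_deriv ?_
  · exact if_pos (le_of_lt ht)
  · simp [h0]

theorem hasDerivAt_gluedProfileSlope (hφ' : Differentiable ℝ (deriv φ)) (h0 : deriv φ 0 = 0)
    (hφ1 : deriv (deriv φ) 1 = -deriv φ 1) (hs : 0 < s)
    (hmatch : c * deriv φ 1 = a / log (s / R)) {r : ℝ} (hr : 0 < r) :
    HasDerivAt (gluedProfileSlope φ a c s R) (gluedProfileSlopeDeriv φ a c s R r) r := by
  refine hasDerivAt_of_eqOn_Iic_of_eqOn_Ici (f := gluedProfileSlope φ a c s R)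
    (f₁ := fun t => c / s ^ 2 * dslope (deriv φ) 0 (t / s))
    (f₂ := fun t => a / log (s / R) * (t ^ 2)⁻¹) (d := gluedProfileSlopeDeriv φ a c s R)
    (fun t (ht : t ≤ s) => if_pos ht)
    (fun t ht => ?_) (fun t ht => ?_) (fun t ht => ?_) hr
  · rw [gluedProfileSlope_of_le h0 hs.ne' hmatch ht]
    field_simp
  · have h := (((hφ' _).hasDerivAt.dslope_of_ne (div_pos ht.1 hs).ne').comp t
      ((hasDerivAt_id t).div_const s)).const_mul (c / s ^ 2)
    refine h.congr_deriv ?_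
    have ht0 : t ≠ 0 := ht.1.ne'
    rw [gluedProfileSlopeDeriv, if_pos ht.2, sub_zero]
    field_simp
  · have ht0 : t ≠ 0 := (hs.trans_le ht).ne'
    have h := ((hasDerivAt_pow 2 t).inv (pow_ne_zero 2 ht0)).const_mul (a / log (s / R))
    refine h.congr_deriv ?_
    rw [gluedProfileSlopeDeriv_of_le h0 hφ1 hs.ne' hmatch ht]
    field_simp
    ring

theorem continuousAt_gluedProfileSlope_zero (hφ' : Differentiable ℝ (deriv φ)) (hs : 0 < s) :
    ContinuousAt (gluedProfileSlope φ a c s R) 0 := by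
  have h : ContinuousAt (fun t => c / s ^ 2 * dslope (deriv φ) 0 (t / s)) 0 :=
    ((hφ'.continuous_dslope 0).comp (continuous_id.div_const s)).continuousAt.const_mul _
  exact h.congr (eventually_of_mem (Iio_mem_nhds hs) fun t ht => (if_pos (le_of_lt ht)).symm)

theorem gluedProfile_laplacian_of_le (hs : 0 < s) {r : ℝ} (hr₀ : 0 ≤ r) (hr : r ≤ s) :
    2 * gluedProfileSlope φ a c s R r + r * gluedProfileSlopeDeriv φ a c s R r
      = c / s ^ 2 * (deriv (deriv φ) (r / s) + dslope (deriv φ) 0 (r / s)) := by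
  simp only [gluedProfileSlope, gluedProfileSlopeDeriv, if_pos hr]
  rcases hr₀.eq_or_lt with rfl | hr₀
  · simp only [zero_div, dslope_same, sub_self, div_zero, mul_zero, add_zero]
    ring
  · field_simp
    ring

theorem gluedProfile_laplacian_of_lt (hs : 0 < s) {r : ℝ} (hr : s < r) :
    2 * gluedProfileSlope φ a c s R r + r * gluedProfileSlopeDeriv φ a c s R r = 0 := by
  simp only [gluedProfileSlope, gluedProfileSlopeDeriv, if_neg (not_le.mpr hr)]
  have : r ≠ 0 := (hs.trans hr).ne'
  field_simp
  ring

theorem gluedProfile_equation {p δ : ℝ} (hp : 0 < p) (ha : 0 ≤ a) (hc : 0 ≤ c)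
    (hcp : c ^ p = δ ^ 2 / s ^ 2 * c) (hs : 0 < s) (hsR : s < R)
    (hφ0 : ∀ t ∈ Icc (0 : ℝ) 1, 0 ≤ φ t)
    (hode : EqOn (fun t => deriv (deriv φ) t + dslope (deriv φ) 0 t) (fun t => -(φ t ^ p))
      (Icc 0 1))
    {r : ℝ} (hr : 0 ≤ r) :
    -(δ ^ 2 * (2 * gluedProfileSlope φ a c s R r + r * gluedProfileSlopeDeriv φ a c s R r))
      = max (gluedProfile φ a c s R r - a) 0 ^ p := by
  rcases le_or_gt r s with hrs | hrs
  · have ht : r / s ∈ Icc (0 : ℝ) 1 := ⟨div_nonneg hr hs.le, (div_le_one hs).mpr hrs⟩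
    have hval : gluedProfile φ a c s R r - a = c * φ (r / s) := by simp [gluedProfile, hrs]
    have hode_t : deriv (deriv φ) (r / s) + dslope (deriv φ) 0 (r / s) = -(φ (r / s) ^ p) :=
      hode ht
    rw [gluedProfile_laplacian_of_le hs hr hrs, hode_t, hval,
      max_eq_left (mul_nonneg hc (hφ0 _ ht)), mul_rpow hc (hφ0 _ ht), hcp]
    ring
  · have hR : 0 < R := hs.trans hsR
    have hL : log (s / R) < 0 := log_neg (div_pos hs hR) ((div_lt_one hR).mpr hsR)
    have hle : gluedProfile φ a c s R r - a ≤ 0 := by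
      rw [gluedProfile, if_neg (not_le.mpr hrs), sub_nonpos, div_le_iff_of_neg hL]
      exact mul_le_mul_of_nonneg_left (log_le_log (div_pos hs hR)
        (div_le_div_of_nonneg_right hrs.le hR.le)) ha
    rw [gluedProfile_laplacian_of_lt hs hrs, max_eq_right hle, zero_rpow hp.ne']
    simp

variable {E : Type*} [NormedAddCommGroup E] [InnerProductSpace ℝ E]

theorem contDiff_gluedProfile_norm (hφ : Differentiable ℝ φ) (hφ' : Differentiable ℝ (deriv φ))
    (h0 : deriv φ 0 = 0) (hb : φ 1 = 0) (hφ1 : deriv (deriv φ) 1 = -deriv φ 1) (hs : 0 < s)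
    (hR : R ≠ 0) (hL : log (s / R) ≠ 0) (hmatch : c * deriv φ 1 = a / log (s / R)) :
    ContDiff ℝ 1 (fun y : E => gluedProfile φ a c s R ‖y‖) :=
  contDiff_radial (fun _ hr => hasDerivAt_gluedProfile hφ h0 hb hs hR hL hmatch hr)
    (hasDerivAt_gluedProfile_zero hφ h0 hs)
    (fun _ hr => hasDerivAt_gluedProfileSlope hφ' h0 hφ1 hs hmatch hr)
    (continuousAt_gluedProfileSlope_zero hφ' hs).continuousWithinAt

theorem laplacian_gluedProfile_norm [FiniteDimensional ℝ E] (hφ : Differentiable ℝ φ)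
    (hφ' : Differentiable ℝ (deriv φ)) (h0 : deriv φ 0 = 0) (hb : φ 1 = 0)
    (hφ1 : deriv (deriv φ) 1 = -deriv φ 1) (hs : 0 < s) (hR : R ≠ 0) (hL : log (s / R) ≠ 0)
    (hmatch : c * deriv φ 1 = a / log (s / R)) (x : E) :
    Δ (fun y : E => gluedProfile φ a c s R ‖y‖) x = Module.finrank ℝ E *
      gluedProfileSlope φ a c s R ‖x‖ + ‖x‖ * gluedProfileSlopeDeriv φ a c s R ‖x‖ :=
  laplacian_radial (fun _ hr => hasDerivAt_gluedProfile hφ h0 hb hs hR hL hmatch hr)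
    (hasDerivAt_gluedProfile_zero hφ h0 hs)
    (fun _ hr => hasDerivAt_gluedProfileSlope hφ' h0 hφ1 hs hmatch hr)
    (continuousAt_gluedProfileSlope_zero hφ' hs).continuousWithinAt x

end Profile

theorem eqOn_Icc_of_radial_ode {φ : ℝ → ℝ} {p : ℝ} (hφ : ContDiff ℝ 2 φ) (hp : 0 < p)
    (h0 : deriv φ 0 = 0)
    (hode : ∀ r ∈ Ioo (0 : ℝ) 1, deriv (deriv φ) r + deriv φ r / r = -(φ r ^ p)) :
    EqOn (fun t => deriv (deriv φ) t + dslope (deriv φ) 0 t) (fun t => -(φ t ^ p)) (Icc 0 1) := by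
  have hφ' : ContDiff ℝ 1 (deriv φ) := (contDiff_succ_iff_deriv (n := 1)).mp hφ |>.2.2
  have hlhs : Continuous fun t => deriv (deriv φ) t + dslope (deriv φ) 0 t :=
    (hφ'.continuous_deriv le_rfl).add ((hφ'.differentiable one_ne_zero).continuous_dslope 0)
  have hrhs : Continuous fun t => -(φ t ^ p) :=
    ((continuous_rpow_const hp.le).comp hφ.continuous).neg
  refine EqOn.of_subset_closure (fun t ht => ?_) hlhs.continuousOn hrhs.continuousOn
    Ioo_subset_Icc_self (closure_Ioo zero_ne_one).ge
  simp only [dslope_zero_of_ne h0 ht.1.ne', hode t ht]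

theorem deriv_deriv_one_of_eqOn_Icc {φ : ℝ → ℝ} {p : ℝ} (hp : p ≠ 0) (h0 : deriv φ 0 = 0)
    (hb : φ 1 = 0)
    (hode : EqOn (fun t => deriv (deriv φ) t + dslope (deriv φ) 0 t) (fun t => -(φ t ^ p))
      (Icc 0 1)) :
    deriv (deriv φ) 1 = -deriv φ 1 := by
  have h1 := hode (right_mem_Icc.mpr zero_le_one)
  simp only [dslope_zero_of_ne h0 one_ne_zero, div_one, hb, zero_rpow hp, neg_zero] at h1
  linarith

theorem rpow_two_div_sub_one_scaling {p δ s : ℝ} (hp : p ≠ 1) (hδ : 0 < δ) (hs : 0 < s) :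
    (δ ^ (2 / (p - 1)) * s ^ (-(2 / (p - 1)))) ^ p
      = δ ^ 2 / s ^ 2 * (δ ^ (2 / (p - 1)) * s ^ (-(2 / (p - 1)))) := by
  have hp' : p - 1 ≠ 0 := sub_ne_zero.mpr hp
  rw [rpow_neg hs.le, ← div_eq_mul_inv, ← div_rpow hδ.le hs.le, ← rpow_mul (by positivity),
    ← div_pow, ← rpow_two, ← rpow_add (by positivity)]
  congr 1
  field_simp
  ring

theorem stmt5_general (p a δ R : ℝ) (hp : 1 < p) (ha : 0 < a) (hδ : 0 < δ) (hR : 0 < R)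
    (φ : ℝ → ℝ)
    (hreg : ContDiff ℝ 2 φ)
    (hpos : ∀ r ∈ Set.Ico (0:ℝ) 1, 0 < φ r)
    (hb : φ 1 = 0)
    (hode : ∀ r ∈ Set.Ioo (0:ℝ) 1,
      deriv (deriv φ) r + deriv φ r / r = -(φ r ^ p))
    (h0 : deriv φ 0 = 0)
    (s : ℝ) (hs : s ∈ Set.Ioo 0 R)
    (hmatch : δ ^ (2 / (p - 1)) * s ^ (-(2 / (p - 1))) * deriv φ 1
      = a / Real.log (s / R))
    (W : EuclideanSpace ℝ (Fin 2) → ℝ)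
    (hW1 : ∀ x : EuclideanSpace ℝ (Fin 2), ‖x‖ ≤ s →
      W x = a + δ ^ (2 / (p - 1)) * s ^ (-(2 / (p - 1))) * φ (‖x‖ / s))
    (hW2 : ∀ x : EuclideanSpace ℝ (Fin 2), s ≤ ‖x‖ → ‖x‖ ≤ R →
      W x = a * Real.log (‖x‖ / R) / Real.log (s / R)) :
    ContDiffOn ℝ 1 W (Metric.ball (0 : EuclideanSpace ℝ (Fin 2)) R) ∧
    (∀ x ∈ Metric.sphere (0 : EuclideanSpace ℝ (Fin 2)) R, W x = 0) ∧
    ∀ x ∈ Metric.ball (0 : EuclideanSpace ℝ (Fin 2)) R,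
      -(δ ^ 2 * lap W x) = max (W x - a) 0 ^ p := by
  obtain ⟨hs, hsR⟩ := hs
  set c := δ ^ (2 / (p - 1)) * s ^ (-(2 / (p - 1)))
  have hL : log (s / R) ≠ 0 := (log_neg (div_pos hs hR) ((div_lt_one hR).mpr hsR)).ne
  have hφ : Differentiable ℝ φ := hreg.differentiable two_ne_zero
  have hφ' : Differentiable ℝ (deriv φ) :=
    ((contDiff_succ_iff_deriv (n := 1)).mp hreg).2.2.differentiable one_ne_zero
  have hode' := eqOn_Icc_of_radial_ode hreg (by linarith) h0 hode
  have hφ1 := deriv_deriv_one_of_eqOn_Icc (by linarith) h0 hb hode'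
  have hφ0 : ∀ t ∈ Icc (0 : ℝ) 1, 0 ≤ φ t := fun t ht =>
    ht.2.eq_or_lt.elim (fun h => h ▸ hb.ge) fun h => (hpos t ⟨ht.1, h⟩).le
  have hWg : ∀ x : EuclideanSpace ℝ (Fin 2), ‖x‖ ≤ R → W x = gluedProfile φ a c s R ‖x‖ := by
    intro x hx
    by_cases hxs : ‖x‖ ≤ s
    · rw [hW1 x hxs, gluedProfile, if_pos hxs]
    · rw [hW2 x (le_of_not_ge hxs) hx, gluedProfile, if_neg hxs]
  refine ⟨(contDiff_gluedProfile_norm hφ hφ' h0 hb hφ1 hs hR.ne' hL hmatch).contDiffOn.congr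
      fun x hx => hWg x (mem_ball_zero_iff.mp hx).le, fun x hx => ?_, fun x hx => ?_⟩
  · rw [mem_sphere_zero_iff_norm] at hx
    rw [hW2 x (hx ▸ hsR.le) hx.le, hx, div_self hR.ne', log_one, mul_zero, zero_div]
  · have hWg_nhds : W =ᶠ[𝓝 x] fun y => gluedProfile φ a c s R ‖y‖ :=
      eventually_of_mem (Metric.isOpen_ball.mem_nhds hx) fun y hy =>
        hWg y (mem_ball_zero_iff.mp hy).le
    rw [lap_eq_laplacian, (laplacian_congr_nhds hWg_nhds).eq_of_nhds,
      laplacian_gluedProfile_norm hφ hφ' h0 hb hφ1 hs hR.ne' hL hmatch,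
      finrank_euclideanSpace_fin, hWg x (mem_ball_zero_iff.mp hx).le]
    push_cast
    exact gluedProfile_equation (by linarith) ha.le (by positivity)
      (rpow_two_div_sub_one_scaling hp.ne' hδ hs) hs hsR hφ0 hode' (norm_nonneg x)

/-- The piecewise-defined W_{δ,a} (Uhlenbeck-type profile glued to
a logarithm via the matching condition) is C¹ in B_R(0), vanishes on ∂B_R(0)
and solves -δ²ΔW = (W - a)₊^p in B_R(0). -/
theorem stmt5 (p a δ R : ℝ) (hp : 1 < p) (ha : 0 < a) (hδ : 0 < δ) (hR : 0 < R)
    (φ : ℝ → ℝ)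
    (hreg : ContDiff ℝ 2 φ)
    (hpos : ∀ r ∈ Set.Ico (0:ℝ) 1, 0 < φ r)
    (hb : φ 1 = 0)
    (hode : ∀ r ∈ Set.Ioo (0:ℝ) 1,
      deriv (deriv φ) r + deriv φ r / r = -(φ r ^ p))
    (h0 : deriv φ 0 = 0)
    (hder : deriv φ 1 < 0)
    (s : ℝ) (hs : s ∈ Set.Ioo 0 R)
    (hmatch : δ ^ (2 / (p - 1)) * s ^ (-(2 / (p - 1))) * deriv φ 1
      = a / Real.log (s / R))
    (W : EuclideanSpace ℝ (Fin 2) → ℝ)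
    (hW1 : ∀ x : EuclideanSpace ℝ (Fin 2), ‖x‖ ≤ s →
      W x = a + δ ^ (2 / (p - 1)) * s ^ (-(2 / (p - 1))) * φ (‖x‖ / s))
    (hW2 : ∀ x : EuclideanSpace ℝ (Fin 2), s ≤ ‖x‖ → ‖x‖ ≤ R →
      W x = a * Real.log (‖x‖ / R) / Real.log (s / R)) :
    ContDiffOn ℝ 1 W (Metric.ball (0 : EuclideanSpace ℝ (Fin 2)) R) ∧
    (∀ x ∈ Metric.sphere (0 : EuclideanSpace ℝ (Fin 2)) R, W x = 0) ∧
    ∀ x ∈ Metric.ball (0 : EuclideanSpace ℝ (Fin 2)) R,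
      -(δ ^ 2 * lap W x) = max (W x - a) 0 ^ p :=
  stmt5_general p a δ R hp ha hδ hR φ hreg hpos hb hode h0 s hs hmatch W hW1 hW2
end
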